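/- arXiv:1404.2906 — 5 statements merged into one kernel-verified Lean document; each statement's English description precedes it below -/
import Mathlib

section
/- Let L > 0, let τ : ℝ → ℝ be smooth and L-periodic, and let Y : ℝ → ℂ be a smooth L-periodic solution of Y'' + τ·Y = 0. Then ∫₀^L τ'(s)·|Y(s)|² ds = 0. -/
/-- `∫₀^L τ'(s) |Y(s)|² ds = 0` for a complex periodic Jacobi field `Y`. -/
theorem tau_deriv_absY_sq_integral_vanishes
    (L : ℝ) (hL : 0 < L) (τ : ℝ → ℝ) (Y : ℝ → ℂ)
    (hτ : ContDiff ℝ (⊤ : ℕ∞) τ) (hτp : Function.Periodic τ L)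
    (hY : ContDiff ℝ (⊤ : ℕ∞) Y) (hYp : Function.Periodic Y L)
    (hJacobi : ∀ s, deriv (deriv Y) s + (τ s : ℂ) * Y s = 0) :
    ∫ s in (0:ℝ)..L, deriv τ s * ‖Y s‖ ^ 2 = 0 := by
  have hYd : Differentiable ℝ Y := hY.differentiable (by simp)
  have hYi : ContDiff ℝ ((⊤:ℕ∞) : WithTop ℕ∞) Y := hY.of_le (by simp)
  have hτi : ContDiff ℝ ((⊤:ℕ∞) : WithTop ℕ∞) τ := hτ.of_le (by simp)
  have hY' : ContDiff ℝ ((⊤:ℕ∞) : WithTop ℕ∞) (deriv Y) := (contDiff_infty_iff_deriv.mp hYi).2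
  have hY'd : Differentiable ℝ (deriv Y) := hY'.differentiable (by simp)
  have hτd : Differentiable ℝ τ := hτ.differentiable (by simp)
  have hτ'c : Continuous (deriv τ) := (contDiff_infty_iff_deriv.mp hτi).2.continuous
  set G : ℝ → ℝ := fun s => τ s * Complex.normSq (Y s) + Complex.normSq (deriv Y s)
    with hGdef
  have key : ∀ s, HasDerivAt G (deriv τ s * Complex.normSq (Y s)) s := by
    intro s
    have hdY : HasDerivAt Y (deriv Y s) s := (hYd s).hasDerivAt
    have hdY2 : HasDerivAt (deriv Y) (deriv (deriv Y) s) s := (hY'd s).hasDerivAt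
    have hτder : HasDerivAt τ (deriv τ s) s := (hτd s).hasDerivAt
    have hre : HasDerivAt (fun t => (Y t).re) ((deriv Y s).re) s := by
      exact Complex.reCLM.hasFDerivAt.comp_hasDerivAt s hdY
    have him : HasDerivAt (fun t => (Y t).im) ((deriv Y s).im) s := by
      exact Complex.imCLM.hasFDerivAt.comp_hasDerivAt s hdY
    have hre' : HasDerivAt (fun t => (deriv Y t).re) ((deriv (deriv Y) s).re) s := by
      exact Complex.reCLM.hasFDerivAt.comp_hasDerivAt s hdY2
    have him' : HasDerivAt (fun t => (deriv Y t).im) ((deriv (deriv Y) s).im) s := by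
      exact Complex.imCLM.hasFDerivAt.comp_hasDerivAt s hdY2
    have hn : HasDerivAt (fun t => Complex.normSq (Y t))
        ((deriv Y s).re * (Y s).re + (Y s).re * (deriv Y s).re
          + ((deriv Y s).im * (Y s).im + (Y s).im * (deriv Y s).im)) s := by
      simp only [Complex.normSq_apply]
      exact (hre.mul hre).add (him.mul him)
    have hn' : HasDerivAt (fun t => Complex.normSq (deriv Y t))
        ((deriv (deriv Y) s).re * (deriv Y s).re + (deriv Y s).re * (deriv (deriv Y) s).re
          + ((deriv (deriv Y) s).im * (deriv Y s).im + (deriv Y s).im * (deriv (deriv Y) s).im))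
        s := by
      simp only [Complex.normSq_apply]
      exact (hre'.mul hre').add (him'.mul him')
    have e : deriv (deriv Y) s = -((τ s : ℂ) * Y s) :=
      eq_neg_of_add_eq_zero_left (hJacobi s)
    have ere : (deriv (deriv Y) s).re = -(τ s * (Y s).re) := by
      rw [e]; simp [Complex.mul_re]
    have eim : (deriv (deriv Y) s).im = -(τ s * (Y s).im) := by
      rw [e]; simp [Complex.mul_im]
    have := (hτder.mul hn).add hn'
    refine this.congr_deriv ?_
    rw [ere, eim, Complex.normSq_apply]
    ring
  have hcont : Continuous fun s => deriv τ s * Complex.normSq (Y s) :=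
    hτ'c.mul (Complex.continuous_normSq.comp hY.continuous)
  have hint : (∫ s in (0:ℝ)..L, deriv τ s * Complex.normSq (Y s)) = G L - G 0 :=
    intervalIntegral.integral_eq_sub_of_hasDerivAt (fun s _ => key s)
      (hcont.intervalIntegrable 0 L)
  have hYL : Y L = Y 0 := by simpa using hYp 0
  have hτL : τ L = τ 0 := by simpa using hτp 0
  have hY'L : deriv Y L = deriv Y 0 := by
    have h1 : (fun x => Y (x + L)) = Y := funext hYp
    have h2 := deriv_comp_add_const (f := Y) (a := L) (x := (0:ℝ))
    rw [h1] at h2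
    simpa using h2.symm
  have hGL : G L = G 0 := by simp [hGdef, hYL, hτL, hY'L]
  have heq : ∀ s, deriv τ s * ‖Y s‖ ^ 2 = deriv τ s * Complex.normSq (Y s) := by
    intro s
    rw [Complex.sq_norm]
  simp_rw [heq]
  rw [hint, hGL, sub_self]
end

section
/- Let L > 0, let τ : ℝ → ℝ be smooth and L-periodic, and let y : ℝ → ℝ be a smooth L-periodic solution of y'' + τ·y = 0. Then ∫₀^L τ(s)·y(s)²·y'(s)² ds = (1/3)·∫₀^L y'(s)⁴ ds. -/
/-- `∫₀^L τ y² (y')² ds = (1/3) ∫₀^L (y')⁴ ds` for a real periodic Jacobi field. -/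
theorem tau_ysq_ydotsq_integral
    (L : ℝ) (hL : 0 < L) (τ y : ℝ → ℝ)
    (hτ : ContDiff ℝ (⊤ : ℕ∞) τ) (hτp : Function.Periodic τ L)
    (hy : ContDiff ℝ (⊤ : ℕ∞) y) (hyp : Function.Periodic y L)
    (hJacobi : ∀ s, deriv (deriv y) s + τ s * y s = 0) :
    ∫ s in (0:ℝ)..L, τ s * (y s) ^ 2 * (deriv y s) ^ 2
      = (1 / 3) * ∫ s in (0:ℝ)..L, (deriv y s) ^ 4 := by
  have hyd : Differentiable ℝ y := hy.differentiable (by simp)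
  have hyinf : ContDiff ℝ (⊤ : ℕ∞) y := hy.of_le (by simp)
  have hy' : ContDiff ℝ (⊤ : ℕ∞) (deriv y) := (contDiff_infty_iff_deriv.mp hyinf).2
  have hy'd : Differentiable ℝ (deriv y) := hy'.differentiable (by simp)
  have hy'c : Continuous (deriv y) := hy'.continuous
  have hy'p : Function.Periodic (deriv y) L := by
    intro x
    have hfun : (fun t => y (t + L)) = y := funext hyp
    rw [← deriv_comp_add_const y L x, hfun]
  set g : ℝ → ℝ := fun s => y s * (deriv y s) ^ 3 with hg
  have hderiv : ∀ s, HasDerivAt g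
      ((deriv y s) ^ 4 - 3 * (τ s * (y s) ^ 2 * (deriv y s) ^ 2)) s := by
    intro s
    have h1 : HasDerivAt y (deriv y s) s := (hyd s).hasDerivAt
    have h2 : HasDerivAt (deriv y) (deriv (deriv y) s) s := (hy'd s).hasDerivAt
    have h3 : HasDerivAt (fun t => (deriv y t) ^ 3)
        ((3 : ℕ) * (deriv y s) ^ 2 * deriv (deriv y) s) s := by
      simpa using h2.fun_pow 3
    have h4 : HasDerivAt g (deriv y s * deriv y s ^ 3 + y s * ((3 : ℕ) * deriv y s ^ 2 * deriv (deriv y) s)) s := h1.fun_mul h3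
    convert h4 using 1
    have hJ : deriv (deriv y) s = -(τ s * y s) := by linarith [hJacobi s]
    rw [hJ]; push_cast; ring
  have hcont : Continuous
      (fun s => (deriv y s) ^ 4 - 3 * (τ s * (y s) ^ 2 * (deriv y s) ^ 2)) := by
    have := hτ.continuous
    have := hy.continuous
    fun_prop
  have hint : ∫ s in (0:ℝ)..L,
      ((deriv y s) ^ 4 - 3 * (τ s * (y s) ^ 2 * (deriv y s) ^ 2)) = g L - g 0 :=
    intervalIntegral.integral_eq_sub_of_hasDerivAt (fun s _ => hderiv s)
      (hcont.intervalIntegrable 0 L)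
  have hgper : g L = g 0 := by
    simp only [hg]
    rw [show L = 0 + L by ring, hyp 0, hy'p 0]
  rw [hgper, sub_self] at hint
  have hI1 : IntervalIntegrable (fun s => (deriv y s) ^ 4) MeasureTheory.volume 0 L :=
    Continuous.intervalIntegrable (by fun_prop) 0 L
  have hI2 : IntervalIntegrable (fun s => 3 * (τ s * (y s) ^ 2 * (deriv y s) ^ 2))
      MeasureTheory.volume 0 L := by
    have := hτ.continuous
    have := hy.continuous
    exact Continuous.intervalIntegrable (by fun_prop) 0 L
  rw [intervalIntegral.integral_sub hI1 hI2, intervalIntegral.integral_const_mul] at hint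
  linarith
end

section
/- Let L > 0, let τ : ℝ → ℝ be smooth and L-periodic, and let Y : ℝ → ℂ be a smooth L-periodic solution of Y'' + τ·Y = 0. Then 2·∫₀^L τ(s)·|Y(s)·Y'(s)|² ds = ∫₀^L |Y'(s)|⁴ ds − ∫₀^L τ(s)·(Y'(s)·conj(Y(s)))² ds. In particular the imaginary part of ∫₀^L τ(s)·(Y'(s)·conj(Y(s)))² ds vanishes. -/
open intervalIntegral Complex

/-- `2∫ τ |YY'|² = ∫ |Y'|⁴ − ∫ τ (Y' conj Y)²`, and the last integral is real. -/
theorem quartic_jacobi_identity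
    (L : ℝ) (hL : 0 < L) (τ : ℝ → ℝ) (Y : ℝ → ℂ)
    (hτ : ContDiff ℝ (⊤ : ℕ∞) τ) (hτp : Function.Periodic τ L)
    (hY : ContDiff ℝ (⊤ : ℕ∞) Y) (hYp : Function.Periodic Y L)
    (hJacobi : ∀ s, deriv (deriv Y) s + (τ s : ℂ) * Y s = 0) :
    (2 : ℂ) * ∫ s in (0:ℝ)..L, (τ s : ℂ) * ((‖Y s * deriv Y s‖ : ℝ) : ℂ) ^ 2
      = (∫ s in (0:ℝ)..L, ((‖deriv Y s‖ : ℝ) : ℂ) ^ 4)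
        - ∫ s in (0:ℝ)..L, (τ s : ℂ) * (deriv Y s * (starRingEnd ℂ) (Y s)) ^ 2
    ∧ (∫ s in (0:ℝ)..L, (τ s : ℂ) * (deriv Y s * (starRingEnd ℂ) (Y s)) ^ 2).im = 0 := by
  set v := deriv Y with hv_def
  have hYd : Differentiable ℝ Y := hY.differentiable (by simp)
  have hvC : ContDiff ℝ (⊤ : ℕ∞) v := (contDiff_infty_iff_deriv.mp (hY.of_le (by simp))).2
  have hvd : Differentiable ℝ v := hvC.differentiable (by simp)
  have hYc : Continuous Y := hY.continuous
  have hvc : Continuous v := hvC.continuous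
  have hτc : Continuous τ := hτ.continuous
  -- key square lemma
  have key : ∀ z : ℂ, ((‖z‖ : ℝ) : ℂ) ^ 2 = z * (starRingEnd ℂ) z := by
    intro z
    rw [Complex.mul_conj]
    norm_cast
    rw [Complex.normSq_eq_norm_sq]
  -- derivative of the auxiliary function
  set H : ℝ → ℂ := fun s => (starRingEnd ℂ) (Y s) * v s * (v s * (starRingEnd ℂ) (v s))
    with hH_def
  set D : ℝ → ℂ := fun s =>
      ((starRingEnd ℂ) (v s) * v s + (starRingEnd ℂ) (Y s) * (-(τ s : ℂ) * Y s))
        * (v s * (starRingEnd ℂ) (v s))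
      + (starRingEnd ℂ) (Y s) * v s
        * ((-(τ s : ℂ) * Y s) * (starRingEnd ℂ) (v s)
            + v s * (starRingEnd ℂ) (-(τ s : ℂ) * Y s)) with hD_def
  have hH : ∀ s, HasDerivAt H (D s) s := by
    intro s
    have hY' : HasDerivAt Y (v s) s := (hYd s).hasDerivAt
    have hv' : HasDerivAt v (-(τ s : ℂ) * Y s) s := by
      have h1 := (hvd s).hasDerivAt
      have h2 : deriv v s = -(τ s : ℂ) * Y s := by linear_combination hJacobi s
      rwa [h2] at h1
    have := (hY'.star.mul hv').mul (hv'.mul hv'.star)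
    simp only [hH_def, hD_def, starRingEnd_apply]
    exact this
  have hDc : Continuous D := by
    rw [hD_def]
    simp only [starRingEnd_apply]
    fun_prop
  -- pointwise identity for the integrand
  have hpt : ∀ s, ((‖v s‖ : ℝ) : ℂ) ^ 4 - 2 * (τ s : ℂ) * ((‖Y s * v s‖ : ℝ) : ℂ) ^ 2
      - (τ s : ℂ) * (v s * (starRingEnd ℂ) (Y s)) ^ 2 = D s := by
    intro s
    have h4 : ((‖v s‖ : ℝ) : ℂ) ^ 4 = (v s * (starRingEnd ℂ) (v s)) ^ 2 := by
      rw [← key]; ring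
    rw [h4, key, hD_def]
    simp only [map_mul, map_neg, Complex.conj_ofReal]
    ring
  -- periodicity of v
  have hvp : Function.Periodic v L := by
    intro s
    have h1 : (fun t => Y (t + L)) = Y := funext hYp
    calc v (s + L) = deriv (fun t => Y (t + L)) s := (deriv_comp_add_const Y L s).symm
      _ = v s := by rw [h1]
  -- fundamental theorem of calculus
  have hint : ∫ s in (0:ℝ)..L, D s = 0 := by
    rw [integral_eq_sub_of_hasDerivAt (fun s _ => hH s) (hDc.intervalIntegrable 0 L)]
    have e1 : Y L = Y 0 := by simpa using hYp 0
    have e2 : v L = v 0 := by simpa using hvp 0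
    simp only [hH_def, e1, e2, sub_self]
  -- integrability of the pieces
  have hi1 : IntervalIntegrable (fun s => ((‖v s‖ : ℝ) : ℂ) ^ 4) MeasureTheory.volume 0 L :=
    (Continuous.intervalIntegrable (by fun_prop) 0 L)
  have hi2 : IntervalIntegrable (fun s => (τ s : ℂ) * ((‖Y s * v s‖ : ℝ) : ℂ) ^ 2)
      MeasureTheory.volume 0 L := (Continuous.intervalIntegrable (by fun_prop) 0 L)
  have hi2' : IntervalIntegrable (fun s => 2 * ((τ s : ℂ) * ((‖Y s * v s‖ : ℝ) : ℂ) ^ 2))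
      MeasureTheory.volume 0 L := hi2.const_mul 2
  have hi3 : IntervalIntegrable (fun s => (τ s : ℂ) * (v s * (starRingEnd ℂ) (Y s)) ^ 2)
      MeasureTheory.volume 0 L := by
    simp only [starRingEnd_apply]
    exact Continuous.intervalIntegrable (by fun_prop) 0 L
  have hsplit : (∫ s in (0:ℝ)..L, ((‖v s‖ : ℝ) : ℂ) ^ 4)
      - 2 * (∫ s in (0:ℝ)..L, (τ s : ℂ) * ((‖Y s * v s‖ : ℝ) : ℂ) ^ 2)
      - (∫ s in (0:ℝ)..L, (τ s : ℂ) * (v s * (starRingEnd ℂ) (Y s)) ^ 2) = 0 := by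
    rw [← intervalIntegral.integral_const_mul,
      ← intervalIntegral.integral_sub hi1 hi2',
      ← intervalIntegral.integral_sub (hi1.sub hi2') hi3, ← hint]
    apply intervalIntegral.integral_congr
    intro s _
    have := hpt s
    dsimp only
    linear_combination this
  have heq : (2 : ℂ) * ∫ s in (0:ℝ)..L, (τ s : ℂ) * ((‖Y s * v s‖ : ℝ) : ℂ) ^ 2
      = (∫ s in (0:ℝ)..L, ((‖v s‖ : ℝ) : ℂ) ^ 4)
        - ∫ s in (0:ℝ)..L, (τ s : ℂ) * (v s * (starRingEnd ℂ) (Y s)) ^ 2 := by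
    linear_combination -hsplit
  refine ⟨heq, ?_⟩
  -- the two real integrals
  have hr1 : (∫ s in (0:ℝ)..L, ((‖v s‖ : ℝ) : ℂ) ^ 4)
      = ((∫ s in (0:ℝ)..L, ‖v s‖ ^ 4 : ℝ) : ℂ) := by
    rw [← intervalIntegral.integral_ofReal]
    norm_num
  have hr2 : (∫ s in (0:ℝ)..L, (τ s : ℂ) * ((‖Y s * v s‖ : ℝ) : ℂ) ^ 2)
      = ((∫ s in (0:ℝ)..L, τ s * ‖Y s * v s‖ ^ 2 : ℝ) : ℂ) := by
    rw [← intervalIntegral.integral_ofReal]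
    norm_num
  have : (∫ s in (0:ℝ)..L, (τ s : ℂ) * (v s * (starRingEnd ℂ) (Y s)) ^ 2)
      = (∫ s in (0:ℝ)..L, ((‖v s‖ : ℝ) : ℂ) ^ 4)
        - (2 : ℂ) * ∫ s in (0:ℝ)..L, (τ s : ℂ) * ((‖Y s * v s‖ : ℝ) : ℂ) ^ 2 := by
    linear_combination -hsplit
  rw [this, hr1, hr2]
  simp
end

section
/- Let τ : ℝ → ℝ be continuous and let Y : ℝ → ℂ be a twice differentiable solution of Y'' + τ·Y = 0 with Y(s) ≠ 0 for all s. Let v : ℝ → ℂ be differentiable with v'(s) = −(Y'(s)/(2·Y(s)))·v(s), and define u(s,y) = v(s)·exp(i·(Y'(s)/Y(s))·y²/2) for (s,y) ∈ ℝ². Then u satisfies the parabolic equation i·∂u/∂s + (1/2)·∂²u/∂y² − (1/2)·τ(s)·y²·u = 0. -/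
/-!
Write `Γ = Y'/Y`. The Jacobi equation `Y'' + τ Y = 0` turns into the Riccati equation
`Γ' + Γ² + τ = 0`. For any amplitude `v` and phase `Γ`, applying the operator to
`v(s) exp(i Γ(s) y² / 2)` leaves `exp(i Γ y² / 2)` times
`i v' + i Γ v / 2 - (Γ' + Γ² + τ) y² v / 2`.
The transport equation `v' = -(Γ/2) v` cancels the first two terms, and the Riccati equation
cancels the last one.
-/

open Complex

lemma hasDerivAt_deriv_div_of_jacobi {Y : ℝ → ℂ} {τ : ℂ} {s : ℝ}
    (hY : DifferentiableAt ℝ Y s) (hY' : DifferentiableAt ℝ (deriv Y) s)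
    (hJacobi : deriv (deriv Y) s + τ * Y s = 0) (hYs : Y s ≠ 0) :
    HasDerivAt (fun s => deriv Y s / Y s) (-τ - (deriv Y s / Y s) ^ 2) s := by
  refine (hY'.hasDerivAt.div hY.hasDerivAt hYs).congr_deriv ?_
  rw [eq_neg_of_add_eq_zero_left hJacobi]
  field_simp

lemma hasDerivAt_gaussian (c z : ℂ) :
    HasDerivAt (fun z => exp (c * z ^ 2)) (2 * c * z * exp (c * z ^ 2)) z :=
  (((hasDerivAt_pow 2 z).const_mul c).cexp).congr_deriv (by simp; ring)

lemma hasDerivAt_deriv_gaussian (c z : ℂ) :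
    HasDerivAt (fun z => 2 * c * z * exp (c * z ^ 2))
      ((2 * c + (2 * c * z) ^ 2) * exp (c * z ^ 2)) z :=
  (((hasDerivAt_id z).const_mul (2 * c)).mul (hasDerivAt_gaussian c z)).congr_deriv
    (by simp; ring)

lemma deriv_deriv_ofReal_gaussian (c : ℂ) (y : ℝ) :
    deriv (deriv fun t : ℝ => exp (c * t ^ 2)) y
      = (2 * c + (2 * c * y) ^ 2) * exp (c * y ^ 2) := by
  have hderiv : deriv (fun t : ℝ => exp (c * t ^ 2)) = fun t : ℝ => 2 * c * t * exp (c * t ^ 2) :=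
    funext fun t => (hasDerivAt_gaussian c t).comp_ofReal.deriv
  rw [hderiv]
  exact (hasDerivAt_deriv_gaussian c y).comp_ofReal.deriv

theorem gaussianBeam_residual {v Γ : ℝ → ℂ} {v' Γ' : ℂ} {s : ℝ}
    (hv : HasDerivAt v v' s) (hΓ : HasDerivAt Γ Γ' s) (τ : ℂ) (y : ℝ) (u : ℝ → ℝ → ℂ)
    (hu : ∀ s y, u s y = v s * exp (I * Γ s * (y : ℂ) ^ 2 / 2)) :
    I * deriv (fun s' => u s' y) s
        + (1 / 2) * deriv (fun y' => deriv (fun y'' => u s y'') y') y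
        - (1 / 2) * τ * (y : ℂ) ^ 2 * u s y
      = (I * v' + I * Γ s / 2 * v s - (Γ' + Γ s ^ 2 + τ) * y ^ 2 / 2 * v s)
          * exp (I * Γ s * (y : ℂ) ^ 2 / 2) := by
  have hds : HasDerivAt (fun s' => u s' y)
      (v' * exp (I * Γ s * y ^ 2 / 2) + v s * (exp (I * Γ s * y ^ 2 / 2) * (I * Γ' * y ^ 2 / 2)))
      s := by
    simp only [hu]
    exact hv.mul ((((hΓ.const_mul I).mul_const ((y : ℂ) ^ 2)).div_const 2).cexp)
  have hprofile : (fun y'' : ℝ => u s y'') = fun t : ℝ => v s * exp (I * Γ s / 2 * t ^ 2) := by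
    funext t
    rw [hu]
    congr 2
    ring
  have hdyy : deriv (fun y' => deriv (fun y'' => u s y'') y') y
      = v s * ((2 * (I * Γ s / 2) + (2 * (I * Γ s / 2) * y) ^ 2)
          * exp (I * Γ s / 2 * y ^ 2)) := by
    simp only [hprofile, deriv_const_mul_field', deriv_deriv_ofReal_gaussian]
  rw [hds.deriv, hdyy, hu]
  ring_nf
  rw [I_sq]
  ring

theorem gaussian_beam_ansatz_general
    (τ : ℝ → ℝ) (Y : ℝ → ℂ)
    (hY : Differentiable ℝ Y) (hY' : Differentiable ℝ (deriv Y))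
    (hJacobi : ∀ s, deriv (deriv Y) s + (τ s : ℂ) * Y s = 0)
    (hYne : ∀ s, Y s ≠ 0)
    (v : ℝ → ℂ) (hv : Differentiable ℝ v)
    (hv' : ∀ s, deriv v s = -(deriv Y s / (2 * Y s)) * v s)
    (u : ℝ → ℝ → ℂ)
    (hu : ∀ s y, u s y
      = v s * Complex.exp (Complex.I * (deriv Y s / Y s) * (y : ℂ) ^ 2 / 2)) :
    ∀ s y : ℝ,
      Complex.I * deriv (fun s' => u s' y) s
        + (1 / 2) * deriv (fun y' => deriv (fun y'' => u s y'') y') y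
        - (1 / 2) * (τ s : ℂ) * (y : ℂ) ^ 2 * u s y = 0 := by
  intro s y
  have hriccati := hasDerivAt_deriv_div_of_jacobi (hY s) (hY' s) (hJacobi s) (hYne s)
  rw [gaussianBeam_residual (hv s).hasDerivAt hriccati (τ s) y u hu, hv' s]
  field_simp
  ring

/-- The ground-state Gaussian beam ansatz solves the parabolic equation
`i ∂_s u + (1/2) ∂_y² u − (1/2) τ y² u = 0`. -/
theorem gaussian_beam_ansatz
    (τ : ℝ → ℝ) (hτ : Continuous τ) (Y : ℝ → ℂ)
    (hY : Differentiable ℝ Y) (hY' : Differentiable ℝ (deriv Y))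
    (hJacobi : ∀ s, deriv (deriv Y) s + (τ s : ℂ) * Y s = 0)
    (hYne : ∀ s, Y s ≠ 0)
    (v : ℝ → ℂ) (hv : Differentiable ℝ v)
    (hv' : ∀ s, deriv v s = -(deriv Y s / (2 * Y s)) * v s)
    (u : ℝ → ℝ → ℂ)
    (hu : ∀ s y, u s y
      = v s * Complex.exp (Complex.I * (deriv Y s / Y s) * (y : ℂ) ^ 2 / 2)) :
    ∀ s y : ℝ,
      Complex.I * deriv (fun s' => u s' y) s
        + (1 / 2) * deriv (fun y' => deriv (fun y'' => u s y'') y') y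
        - (1 / 2) * (τ s : ℂ) * (y : ℂ) ^ 2 * u s y = 0 :=
  gaussian_beam_ansatz_general τ Y hY hY' hJacobi hYne v hv hv' u hu
end

section
/- Let L > 0, let τ : ℝ → ℝ be smooth and L-periodic, and let Y : ℝ → ℂ be a smooth L-periodic solution of Y'' + τ·Y = 0. Then ∫₀^L τ(s)·( conj(Y(s))²·Y'(s)² − Y(s)²·conj(Y)'(s)² ) ds = 0. -/
/-- `∫₀^L τ (conj(Y)² Y'² − Y² conj(Y)'²) ds = 0` for a periodic complex Jacobi field. -/
theorem P1_contribution_vanishes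
    (L : ℝ) (hL : 0 < L) (τ : ℝ → ℝ) (Y : ℝ → ℂ)
    (hτ : ContDiff ℝ (⊤ : ℕ∞) τ) (hτp : Function.Periodic τ L)
    (hY : ContDiff ℝ (⊤ : ℕ∞) Y) (hYp : Function.Periodic Y L)
    (hJacobi : ∀ s, deriv (deriv Y) s + (τ s : ℂ) * Y s = 0) :
    ∫ s in (0:ℝ)..L, (τ s : ℂ)
        * (((starRingEnd ℂ) (Y s)) ^ 2 * (deriv Y s) ^ 2
          - (Y s) ^ 2 * (deriv (fun u => (starRingEnd ℂ) (Y u)) s) ^ 2) = 0 := by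
  have hYd : Differentiable ℝ Y := hY.differentiable (by simp)
  have hYc : ContDiff ℝ (⊤ : ℕ∞) (deriv Y) := (contDiff_infty_iff_deriv.mp (hY.of_le (by simp))).2
  have hY1c : Continuous (deriv Y) := hYc.continuous
  have hY1d : Differentiable ℝ (deriv Y) := hYc.differentiable (by simp)
  -- derivative of the conjugate
  have hconj : ∀ s, deriv (fun u => (starRingEnd ℂ) (Y u)) s = star (deriv Y s) := by
    intro s
    have h := ((hYd s).hasDerivAt.star).deriv
    simpa only [starRingEnd_apply] using h
  -- rewrite the integrand
  have hint : (∫ s in (0:ℝ)..L, (τ s : ℂ)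
        * (((starRingEnd ℂ) (Y s)) ^ 2 * (deriv Y s) ^ 2
          - (Y s) ^ 2 * (deriv (fun u => (starRingEnd ℂ) (Y u)) s) ^ 2))
      = ∫ s in (0:ℝ)..L, (τ s : ℂ) *
          (star (Y s) ^ 2 * (deriv Y s) ^ 2 - (Y s) ^ 2 * (star (deriv Y s)) ^ 2) := by
    refine intervalIntegral.integral_congr fun s _ => ?_
    rw [hconj s, starRingEnd_apply]
  rw [hint]
  -- antiderivative
  have hderiv : ∀ s ∈ Set.uIcc (0:ℝ) L,
      HasDerivAt (fun u => -((star (Y u)) * deriv Y u - Y u * star (deriv Y u))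
          * (deriv Y u * star (deriv Y u)))
        ((τ s : ℂ) * (star (Y s) ^ 2 * (deriv Y s) ^ 2
            - (Y s) ^ 2 * (star (deriv Y s)) ^ 2)) s := by
    intro s _
    have hY' : HasDerivAt Y (deriv Y s) s := (hYd s).hasDerivAt
    have hY1' : HasDerivAt (deriv Y) (deriv (deriv Y) s) s := (hY1d s).hasDerivAt
    have h1 : HasDerivAt (fun u => star (Y u) * deriv Y u)
        (star (deriv Y s) * deriv Y s + star (Y s) * deriv (deriv Y) s) s :=
      (hY'.star).mul hY1'
    have h2 : HasDerivAt (fun u => Y u * star (deriv Y u))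
        (deriv Y s * star (deriv Y s) + Y s * star (deriv (deriv Y) s)) s :=
      hY'.mul hY1'.star
    have h3 : HasDerivAt (fun u => deriv Y u * star (deriv Y u))
        (deriv (deriv Y) s * star (deriv Y s) + deriv Y s * star (deriv (deriv Y) s)) s :=
      hY1'.mul hY1'.star
    have h4 := ((h1.sub h2).mul h3).neg
    have hJ : deriv (deriv Y) s = -((τ s : ℂ) * Y s) := by
      have := hJacobi s; linear_combination this
    have hJs : star (deriv (deriv Y) s) = -((τ s : ℂ) * star (Y s)) := by
      rw [hJ]
      simp only [star_neg, star_mul', Complex.star_def, Complex.conj_ofReal]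
    convert h4 using 1
    · rfl
    · funext u; simp only [Pi.neg_apply, Pi.mul_apply, Pi.sub_apply]; ring
    · rw [hJ]
      simp only [star_neg, star_mul', Complex.star_def, Complex.conj_ofReal, Pi.sub_apply]
      ring
  have hfc : Continuous fun s => (τ s : ℂ) *
      (star (Y s) ^ 2 * (deriv Y s) ^ 2 - (Y s) ^ 2 * (star (deriv Y s)) ^ 2) := by
    have h1 : Continuous fun s => (τ s : ℂ) := Complex.continuous_ofReal.comp hτ.continuous
    have h2 : Continuous Y := hY.continuous
    fun_prop
  rw [intervalIntegral.integral_eq_sub_of_hasDerivAt hderiv (hfc.intervalIntegrable 0 L)]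
  -- periodicity of `deriv Y`
  have hY1p : deriv Y L = deriv Y 0 := by
    have h : (fun x => Y (x + L)) = Y := by funext u; exact hYp u
    have h2 := deriv_comp_add_const Y L 0
    rw [h] at h2
    simpa using h2.symm
  have hYL : Y L = Y 0 := by simpa using hYp 0
  rw [hYL, hY1p]
  ring
end
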